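/- Let R be a ring, s an element of the center of R, and X a bounded chain complex of finitely generated projective R-modules such that for every q and every x ∈ H_q(X) there exists n with sⁿ·x = 0 (i.e., the localization of the homology of X at the powers of s vanishes). Then there exists an integer n ≥ 1 such that the chain map sⁿ·id_X is chain homotopic to zero. -/

import Mathlib

/-!
Build a null-homotopy of `sⁿ · id` degree by degree, from the bottom of the complex upwards.
Suppose `h` already satisfies `dh + hd = s^N` below degree `k`. Then `u = s^N - hd` maps `X_k`
into the cycles, so `u` composed with the projection to `H_k(X)` is killed by a single power
`s^m`, as `X_k` is finitely generated. Hence `s^m u` factors through the boundaries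
`d(X_{k+1})`, and projectivity of `X_k` lifts it to `ℓ : X_k → X_{k+1}` with `dℓ = s^m u`.
Replacing `h` by `s^m h` in the degrees already treated and by `ℓ` in degree `k` gives
`dh + hd = s^(m+N)` below degree `k + 1`. Boundedness stops the process after finitely many steps.
-/

open CategoryTheory Limits

universe u

def centralSmul {R : Type u} [Ring R] (M : ModuleCat.{u} R) (s : R)
    (hs : ∀ r, s * r = r * s) : M ⟶ M := ModuleCat.ofHom
  { toFun := fun x => s • x
    map_add' := fun x y => smul_add s x y
    map_smul' := fun r x => by
      show s • (r • x) = r • (s • x)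
      rw [smul_smul, smul_smul, hs] }

def centralSmulChain {R : Type u} [Ring R] (X : ChainComplex (ModuleCat.{u} R) ℤ) (s : R)
    (hs : ∀ r, s * r = r * s) : X ⟶ X where
  f i := centralSmul (X.X i) s hs
  comm' i j _ := by
    ext x
    show (X.d i j).hom (s • x) = s • (X.d i j).hom x
    exact (X.d i j).hom.map_smul s x

theorem pow_central {R : Type u} [Ring R] {s : R} (hs : ∀ r, s * r = r * s) (n : ℕ) :
    ∀ r, s ^ n * r = r * s ^ n :=
  fun r => Commute.pow_left (hs r) n

lemma Submodule.FG.exists_le_of_le_iSup {R M : Type*} [Semiring R] [AddCommMonoid M]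
    [Module R M] {N : Submodule R M} (hN : N.FG) (Q : ℕ →o Submodule R M) (h : N ≤ ⨆ k, Q k) :
    ∃ k, N ≤ Q k := by
  have hc := (Submodule.fg_iff_compact N).1 hN
  rw [CompleteLattice.isCompactElement_iff_le_of_directed_sSup_le] at hc
  obtain ⟨_, ⟨k, rfl⟩, hk⟩ :=
    hc _ (Set.range_nonempty Q) (directedOn_range.2 Q.monotone.directed_le) h
  exact ⟨k, hk⟩

section

variable {R : Type u} [Ring R] {s : R}

@[simp]
lemma centralSmul_apply {M : ModuleCat.{u} R} (hs : ∀ r, s * r = r * s) (x : M) :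
    (centralSmul M s hs).hom x = s • x := rfl

lemma Submodule.FG.exists_pow_smul_mem {M : Type u} [AddCommGroup M] [Module R M]
    (hs : ∀ r, s * r = r * s) {N P : Submodule R M} (hN : N.FG)
    (h : ∀ x ∈ N, ∃ n : ℕ, s ^ n • x ∈ P) : ∃ n : ℕ, ∀ x ∈ N, s ^ n • x ∈ P := by
  let Q : ℕ →o Submodule R M :=
    ⟨fun n => P.comap (centralSmul (ModuleCat.of R M) (s ^ n) (pow_central hs n)).hom,
      monotone_nat_of_le_succ fun n x (hx : s ^ n • x ∈ P) =>
        show s ^ (n + 1) • x ∈ P by rw [pow_succ', mul_smul]; exact P.smul_mem s hx⟩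
  obtain ⟨n, hn⟩ := hN.exists_le_of_le_iSup Q fun x hx =>
    (Submodule.mem_iSup_of_chain Q x).2 (h x hx)
  exact ⟨n, hn⟩

end

namespace CategoryTheory.ShortComplex

variable {R : Type u} [Ring R] {s : R} {S : ShortComplex (ModuleCat.{u} R)}

lemma exists_pow_smul_mem_range_f (htors : ∀ x : S.homology, ∃ n : ℕ, s ^ n • x = 0)
    {z : S.X₂} (hz : S.g z = 0) : ∃ n : ℕ, s ^ n • z ∈ LinearMap.range S.f.hom := by
  let e := S.moduleCatHomologyIso
  let c : S.moduleCatLeftHomologyData.H := S.moduleCatLeftHomologyData.π ⟨z, hz⟩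
  obtain ⟨n, hn⟩ := htors (e.inv c)
  have hc : s ^ n • c = 0 := by
    simpa using congr(e.hom $hn)
  obtain ⟨y, hy⟩ := (Submodule.Quotient.mk_eq_zero _).1 hc
  exact ⟨n, y, congr(Subtype.val $hy)⟩

lemma exists_lift_pow_smul (hs : ∀ r, s * r = r * s)
    (htors : ∀ x : S.homology, ∃ n : ℕ, s ^ n • x = 0)
    {M : ModuleCat.{u} R} [Module.Finite R M] [Module.Projective R M]
    (u : M ⟶ S.X₂) (hu : u ≫ S.g = 0) :
    ∃ (n : ℕ) (ℓ : M ⟶ S.X₁), ∀ x, S.f (ℓ x) = s ^ n • u x := by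
  obtain ⟨n, hn⟩ := (Module.Finite.fg_top.map u.hom).exists_pow_smul_mem hs
    (P := LinearMap.range S.f.hom) <| by
      rintro _ ⟨x, -, rfl⟩
      exact S.exists_pow_smul_mem_range_f htors congr($hu x)
  obtain ⟨ℓ, hℓ⟩ := Module.projective_lifting_property S.f.hom.rangeRestrict
    ((u ≫ centralSmul _ _ (pow_central hs n)).hom.codRestrict _
      fun x => hn _ ⟨x, trivial, rfl⟩)
    (LinearMap.surjective_rangeRestrict _)
  exact ⟨n, ModuleCat.ofHom ℓ, fun x => congr(Subtype.val $(LinearMap.congr_fun hℓ x))⟩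

end CategoryTheory.ShortComplex

section

variable {R : Type u} [Ring R]

structure PartialNullHomotopy (X : ChainComplex (ModuleCat.{u} R) ℤ) (s : R) (N : ℕ) (k : ℤ) where
  hom : ∀ p q, X.X p ⟶ X.X q
  hom_eq_zero : ∀ p q, q ≠ p + 1 → hom p q = 0
  comm : ∀ i < k, ∀ x : X.X i,
    X.d (i + 1) i (hom i (i + 1) x) + hom (i - 1) i (X.d i (i - 1) x) = s ^ N • x

namespace PartialNullHomotopy

variable {X : ChainComplex (ModuleCat.{u} R) ℤ} {s : R} {N : ℕ} {k : ℤ}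

def ofIsZero (X : ChainComplex (ModuleCat.{u} R) ℤ) (s : R) (N : ℕ) (k : ℤ)
    (hX : ∀ i < k, IsZero (X.X i)) : PartialNullHomotopy X s N k where
  hom _ _ := 0
  hom_eq_zero _ _ _ := rfl
  comm i hi x := by
    simp [(ModuleCat.isZero_iff_subsingleton.1 (hX i hi)).elim x 0]

def powSmul (H : PartialNullHomotopy X s N k) (hs : ∀ r, s * r = r * s) (m : ℕ) :
    PartialNullHomotopy X s (m + N) k where
  hom p q := H.hom p q ≫ centralSmul _ _ (pow_central hs m)
  hom_eq_zero p q hpq := by rw [H.hom_eq_zero p q hpq, zero_comp]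
  comm i hi x := by
    simp only [ModuleCat.hom_comp, LinearMap.comp_apply, centralSmul_apply]
    rw [map_smul, ← smul_add, H.comm i hi x, pow_add, mul_smul]

def update (H : PartialNullHomotopy X s N k) (ℓ : X.X k ⟶ X.X (k + 1))
    (hℓ : ∀ x, X.d (k + 1) k (ℓ x) + H.hom (k - 1) k (X.d k (k - 1) x) = s ^ N • x) :
    PartialNullHomotopy X s N (k + 1) where
  hom p q :=
    if hpq : p = k ∧ q = k + 1 then (X.XIsoOfEq hpq.1).hom ≫ ℓ ≫ (X.XIsoOfEq hpq.2).inv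
    else H.hom p q
  hom_eq_zero p q hpq := by
    rw [dif_neg (by rintro ⟨rfl, rfl⟩; exact hpq rfl), H.hom_eq_zero p q hpq]
  comm i hi x := by
    rcases (Int.lt_add_one_iff.1 hi).lt_or_eq with hi | rfl
    · rw [dif_neg (by omega), dif_neg (by omega)]
      exact H.comm i hi x
    · rw [dif_pos ⟨rfl, rfl⟩, dif_neg (by omega)]
      simpa using hℓ x

def toHomotopy (H : PartialNullHomotopy X s N k) (hs : ∀ r, s * r = r * s)
    (hX : ∀ i, k ≤ i → IsZero (X.X i)) :
    Homotopy (centralSmulChain X (s ^ N) (pow_central hs N)) 0 where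
  hom := H.hom
  zero i j hij := H.hom_eq_zero i j fun h => hij (by simp [h])
  comm i := by
    rw [dNext_eq _ (show (ComplexShape.down ℤ).Rel i (i - 1) by simp),
      prevD_eq _ (show (ComplexShape.down ℤ).Rel (i + 1) i by simp)]
    rcases lt_or_ge i k with hi | hi
    · ext x
      simpa [centralSmulChain, add_comm] using (H.comm i hi x).symm
    · exact (hX i hi).eq_of_src _ _

lemma exists_extend (H : PartialNullHomotopy X s N k) (hs : ∀ r, s * r = r * s)
    (htors : ∀ x : X.homology k, ∃ n : ℕ, s ^ n • x = 0)
    [Module.Finite R (X.X k)] [Module.Projective R (X.X k)] :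
    ∃ m : ℕ, Nonempty (PartialNullHomotopy X s (m + N) (k + 1)) := by
  let u : X.X k ⟶ X.X k := centralSmul _ _ (pow_central hs N) - X.d k (k - 1) ≫ H.hom (k - 1) k
  have hu : u ≫ X.d k (k - 1) = 0 := by
    ext x
    have h := H.comm (k - 1) (by omega) (X.d k (k - 1) x)
    have hdd : X.d (k - 1) (k - 1 - 1) (X.d k (k - 1) x) = 0 := by
      simp [← ConcreteCategory.comp_apply]
    rw [sub_add_cancel, hdd, map_zero, add_zero] at h
    simp [u, h]
  let e := X.homologyIsoSc' (k + 1) k (k - 1) (by simp) (by simp)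
  have htors' (y : (X.sc' (k + 1) k (k - 1)).homology) : ∃ n : ℕ, s ^ n • y = 0 :=
    (htors (e.inv y)).imp fun n hn => by simpa using congr(e.hom $hn)
  obtain ⟨m, ℓ, hℓ⟩ : ∃ (m : ℕ) (ℓ : X.X k ⟶ X.X (k + 1)),
      ∀ x, X.d (k + 1) k (ℓ x) = s ^ m • u x :=
    ShortComplex.exists_lift_pow_smul hs htors' u hu
  refine ⟨m, ⟨(H.powSmul hs m).update ℓ fun x => ?_⟩⟩
  simp [powSmul, hℓ, u, pow_add, mul_smul, smul_sub]

end PartialNullHomotopy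

lemma exists_partialNullHomotopy {X : ChainComplex (ModuleCat.{u} R) ℤ} {s : R}
    (hs : ∀ r, s * r = r * s)
    (hfg : ∀ i, Module.Finite R (X.X i) ∧ Module.Projective R (X.X i))
    (htors : ∀ (q : ℤ) (x : X.homology q), ∃ n : ℕ, s ^ n • x = 0)
    {a : ℤ} (ha : ∀ i < a, IsZero (X.X i)) (j : ℕ) :
    ∃ N : ℕ, Nonempty (PartialNullHomotopy X s N (a + j)) := by
  induction j with
  | zero => exact ⟨0, ⟨.ofIsZero X s 0 _ (by simpa using ha)⟩⟩
  | succ j ih =>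
    obtain ⟨N, ⟨H⟩⟩ := ih
    have := (hfg (a + j)).1
    have := (hfg (a + j)).2
    obtain ⟨m, hm⟩ := H.exists_extend hs (htors _)
    exact ⟨m + N, by rwa [Nat.cast_succ, ← add_assoc]⟩

end

/-- If `s` is central in `R` and `X` is a bounded chain complex of finitely
generated projective `R`-modules whose homology is killed by powers of `s` (i.e. the
localization of the homology at the powers of `s` vanishes), then some power `sⁿ·id_X`
(`n ≥ 1`) is chain homotopic to zero. -/
theorem stmt14 {R : Type u} [Ring R] (s : R) (hs : ∀ r, s * r = r * s)
    (X : ChainComplex (ModuleCat.{u} R) ℤ)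
    (hbdd : ∃ a b : ℤ, ∀ i, (i < a ∨ b < i) → IsZero (X.X i))
    (hfg : ∀ i, Module.Finite R (X.X i) ∧ Module.Projective R (X.X i))
    (htors : ∀ (q : ℤ) (x : X.homology q), ∃ n : ℕ, s ^ n • x = 0) :
    ∃ n : ℕ, 1 ≤ n ∧
      Nonempty (Homotopy (centralSmulChain X (s ^ n) (pow_central hs n)) 0) := by
  obtain ⟨a, b, hX⟩ := hbdd
  obtain ⟨N, ⟨H⟩⟩ := exists_partialNullHomotopy hs hfg htors (fun i hi => hX i (.inl hi))
    ((b - a).toNat + 1)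
  exact ⟨1 + N, by omega,
    ⟨(H.powSmul hs 1).toHomotopy hs fun i hi => hX i (.inr (by omega))⟩⟩
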